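/- Let (V,d) be a finite metric space, p ≥ 1 a real number, and let F, F* ⊆ V be nonempty sets with |F| = |F*| = k. Suppose F is single-swap locally optimal for the ℓ_p objective, i.e., for every r ∈ F and f' ∈ V we have Φ_p((F \ {r}) ∪ {f'}) ≥ Φ_p(F). Then Φ_p(F) ≤ 5p · Φ_p(F*). Moreover, in the case p = 2, the stronger bound Φ_2(F) ≤ 9 · Φ_2(F*) holds. -/

import Mathlib

/-!
Pair every facility `y ∈ F*` with a facility `r y ∈ F` so that every facility of `F` is used
at most twice and `r y` is the nearest `F`-facility of no point of `F*` other than `y`.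
Swapping `r y` out for `y`, the clients of `y` move to `y` and the other clients `j` of `r y`
move to the `F`-facility nearest to their optimal facility, at distance at most
`2 d(j, F*) + d(j, F)`. Summing the local optimality inequalities over these swaps gives
`3 ∑ d(j, F)^p ≤ ∑ d(j, F*)^p + 2 ∑ (2 d(j, F*) + d(j, F))^p`, and Minkowski's inequality
turns this into `3 Φ^p ≤ Φ*^p + 2 (2 Φ* + Φ)^p`. Since `(5p)⁻¹^p + 2 (1 + 2 (5p)⁻¹)^p ≤ 3`,
this forces `Φ ≤ 5p Φ*`; for `p = 2` it is a quadratic inequality giving `Φ ≤ 9 Φ*`.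
-/

open Finset

/-- Distance from a client `j` to a nonempty facility set `F`: `min_{f ∈ F} d(j,f)`. -/
noncomputable def distSet {V : Type*} [MetricSpace V] (j : V) (F : Finset V)
    (hF : F.Nonempty) : ℝ :=
  F.inf' hF fun f => dist j f

/-- The ℓ_p-norm cost of a nonempty facility set `F`:
`Φ_p(F) = (∑_{j ∈ V} d(j,F)^p)^{1/p}`. -/
noncomputable def phiP {V : Type*} [MetricSpace V] [Fintype V] (p : ℝ) (F : Finset V)
    (hF : F.Nonempty) : ℝ :=
  (∑ j : V, distSet j F hF ^ p) ^ (1 / p)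

section Scalar

open Real

lemma exp_two_fifths_lt : exp (2 / 5) < 1.495 := by
  have h : exp (2 / 5) ^ 5 < 1.495 ^ 5 := by
    calc exp (2 / 5) ^ 5 = exp 1 ^ 2 := by rw [← exp_nat_mul, ← exp_nat_mul]; norm_num
      _ < 2.7182818286 ^ 2 := by gcongr; exact exp_one_lt_d9
      _ < 1.495 ^ 5 := by norm_num
  exact lt_of_pow_lt_pow_left₀ 5 (by norm_num) h

lemma inv_five_mul_rpow_add_le_three_of_le_two {p : ℝ} (hp₁ : 1 ≤ p) (hp₂ : p ≤ 2) :
    (5 * p)⁻¹ ^ p + 2 * (1 + 2 * (5 * p)⁻¹) ^ p ≤ 3 := by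
  set c := (5 * p)⁻¹ with hc
  have hcp : c * p = 1 / 5 := by rw [hc]; field_simp
  have hc₀ : 0 < c := by positivity
  have hc₁ : c ≤ 1 / 5 := by nlinarith
  -- Bernoulli's inequality applies to the exponent `p - 1 ∈ [0, 1]`.
  have hsplit : ∀ x : ℝ, 0 < x → x ^ p = x * x ^ (p - 1) := fun x hx => by
    simpa using rpow_add hx 1 (p - 1)
  have h₁ : c ^ (p - 1) ≤ 1 + (p - 1) * (-4 / 5) :=
    calc c ^ (p - 1) ≤ (1 + (-4 / 5)) ^ (p - 1) := by gcongr; norm_num; linarith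
      _ ≤ 1 + (p - 1) * (-4 / 5) :=
        rpow_one_add_le_one_add_mul_self (by norm_num) (by linarith) (by linarith)
  have h₂ : (1 + 2 * c) ^ (p - 1) ≤ 1 + (p - 1) * (2 * c) :=
    rpow_one_add_le_one_add_mul_self (by linarith) (by linarith) (by linarith)
  rw [hsplit c hc₀, hsplit (1 + 2 * c) (by positivity)]
  nlinarith [mul_le_mul_of_nonneg_left h₁ hc₀.le,
    mul_le_mul_of_nonneg_left h₂ (by positivity : (0:ℝ) ≤ 1 + 2 * c)]

lemma inv_five_mul_rpow_add_le_three_of_two_le {p : ℝ} (hp : 2 ≤ p) :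
    (5 * p)⁻¹ ^ p + 2 * (1 + 2 * (5 * p)⁻¹) ^ p ≤ 3 := by
  set c := (5 * p)⁻¹ with hc
  have hcp : 2 * c * p = 2 / 5 := by rw [hc]; field_simp
  have hc₀ : 0 < c := by positivity
  have hc₁ : c ≤ 1 / 10 := by nlinarith
  have h₁ : c ^ p ≤ 1 / 100 :=
    calc c ^ p ≤ c ^ (2 : ℝ) := rpow_le_rpow_of_exponent_ge hc₀ (by linarith) hp
      _ ≤ 1 / 100 := by rw [rpow_two]; nlinarith
  have h₂ : (1 + 2 * c) ^ p ≤ 1.495 :=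
    calc (1 + 2 * c) ^ p ≤ exp (2 * c) ^ p := by
          gcongr; linarith [add_one_le_exp (2 * c)]
      _ = exp (2 / 5) := by rw [← exp_mul, hcp]
      _ ≤ 1.495 := exp_two_fifths_lt.le
  linarith

lemma inv_five_mul_rpow_add_le_three {p : ℝ} (hp : 1 ≤ p) :
    (5 * p)⁻¹ ^ p + 2 * (1 + 2 * (5 * p)⁻¹) ^ p ≤ 3 := by
  -- Equality holds at `p = 1`, so near it the bound `(1 + 2 (5p)⁻¹) ^ p ≤ exp (2 / 5)` is too weak.
  rcases le_total p 2 with h | h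
  · exact inv_five_mul_rpow_add_le_three_of_le_two hp h
  · exact inv_five_mul_rpow_add_le_three_of_two_le h

lemma le_five_mul_of_three_rpow_le {p a t : ℝ} (hp : 1 ≤ p) (ha : 0 ≤ a) (ht : 0 ≤ t)
    (h : 3 * t ^ p ≤ a ^ p + 2 * (2 * a + t) ^ p) : t ≤ 5 * p * a := by
  by_contra! hlt
  set c := (5 * p)⁻¹ with hc
  have hp₀ : 0 < p := by linarith
  have ht₀ : 0 < t := by nlinarith
  have hac : a < c * t := by rw [hc, inv_mul_eq_div, lt_div_iff₀ (by positivity)]; linarith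
  have h₁ : a ^ p ≤ c ^ p * t ^ p := by
    rw [← mul_rpow (by positivity) ht]; exact rpow_le_rpow ha hac.le hp₀.le
  have h₂ : (2 * a + t) ^ p < (1 + 2 * c) ^ p * t ^ p := by
    rw [← mul_rpow (by positivity) ht]; exact rpow_lt_rpow (by positivity) (by nlinarith) hp₀
  nlinarith [inv_five_mul_rpow_add_le_three hp, rpow_pos_of_pos ht₀ p]

lemma le_nine_mul_of_three_sq_le {a t : ℝ} (ha : 0 ≤ a)
    (h : 3 * t ^ 2 ≤ a ^ 2 + 2 * (2 * a + t) ^ 2) : t ≤ 9 * a := by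
  nlinarith

end Scalar

lemma Finset.exists_mapsTo_injOn_of_card_le {α β : Type*} [Nonempty β] {s : Finset α}
    {t : Finset β} (h : #s ≤ #t) : ∃ f : α → β, Set.MapsTo f s t ∧ Set.InjOn f s := by
  classical
  obtain ⟨e⟩ := Function.Embedding.nonempty_of_card_le (α := s) (β := t) (by simpa using h)
  refine ⟨fun a => if ha : a ∈ s then e ⟨a, ha⟩ else Classical.arbitrary β, ?_, ?_⟩
  · intro a ha
    simp [mem_coe.1 ha]
  · intro a ha a' ha' heq
    simp only [mem_coe] at ha ha'
    simpa [ha, ha', Subtype.ext_iff] using heq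

lemma Finset.exists_mapsTo_card_fiber_le {α β : Type*} [DecidableEq β] [Nonempty β]
    {s : Finset α} {t : Finset β} {n : ℕ} (h : #s ≤ n * #t) :
    ∃ g : α → β, Set.MapsTo g s t ∧ ∀ b, #{a ∈ s | g a = b} ≤ n := by
  obtain ⟨f, hf, hinj⟩ := exists_mapsTo_injOn_of_card_le (s := s)
    (t := t ×ˢ range n) (by simpa [mul_comm] using h)
  refine ⟨fun a => (f a).1, fun a ha => (mem_product.1 (hf ha)).1, fun b => ?_⟩
  calc #{a ∈ s | (f a).1 = b} ≤ #(range n) := by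
        refine card_le_card_of_injOn (fun a => (f a).2) (fun a ha => ?_)
          fun a ha a' ha' heq => ?_
        · exact (mem_product.1 (hf (mem_filter.1 ha).1)).2
        · rw [mem_coe, mem_filter] at ha ha'
          exact hinj ha.1 ha'.1 (Prod.ext (ha.2.trans ha'.2.symm) heq)
    _ = n := card_range n

section Pairing

variable {α : Type*} [DecidableEq α]

lemma card_filter_fiber_ne_one_le {G F : Finset α} (hcard : #G ≤ #F) {σ : α → α}
    (hσ : Set.MapsTo σ G F) :
    #{y ∈ G | #{z ∈ G | σ z = σ y} ≠ 1} ≤ 2 * #{f ∈ F | #{y ∈ G | σ y = f} = 0} := by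
  set deg : α → ℕ := fun f => #{y ∈ G | σ y = f}
  show #{y ∈ G | deg (σ y) ≠ 1} ≤ 2 * #{f ∈ F | deg f = 0}
  have hA : #{y ∈ G | deg (σ y) ≠ 1} = ∑ f ∈ F, if deg f ≠ 1 then deg f else 0 := by
    rw [card_eq_sum_card_fiberwise (fun y hy => hσ (mem_filter.1 hy).1)]
    refine sum_congr rfl fun f _ => ?_
    rw [filter_filter]
    split_ifs with hf
    · exact congrArg card (filter_congr fun y _ => ⟨And.right, fun h => ⟨h ▸ hf, h⟩⟩)
    · exact card_eq_zero.2 (filter_false_of_mem fun y _ ⟨h, hy⟩ => hf (hy ▸ h))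
  have hG : #G = ∑ f ∈ F, deg f := card_eq_sum_card_fiberwise hσ
  have hF₀ : #{f ∈ F | deg f = 0} = ∑ f ∈ F, if deg f = 0 then 1 else 0 := card_filter _ _
  have hpt : ∀ f ∈ F, (if deg f ≠ 1 then deg f else 0) + 2 ≤
      2 * deg f + 2 * if deg f = 0 then 1 else 0 := fun f _ => by split_ifs <;> omega
  have := sum_le_sum hpt
  simp only [sum_add_distrib, ← mul_sum, sum_const, smul_eq_mul] at this
  omega

lemma exists_swap_pairing {G F : Finset α} (hcard : #G ≤ #F) {σ : α → α}
    (hσ : Set.MapsTo σ G F) :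
    ∃ r : α → α, Set.MapsTo r G F ∧ (∀ y ∈ G, ∀ z ∈ G, σ z = r y → z = y) ∧
      ∀ f, #{y ∈ G | r y = f} ≤ 2 := by
  -- `r y = σ y` if `y` is the only point of `G` over `σ y`; the other points of `G` are sent,
  -- at most two at a time, to facilities over which no point of `G` lies.
  rcases isEmpty_or_nonempty α with _ | _
  · exact ⟨σ, hσ, fun y => isEmptyElim y, fun f => isEmptyElim f⟩
  set deg : α → ℕ := fun f => #{y ∈ G | σ y = f}
  obtain ⟨g, hg, hg₂⟩ := exists_mapsTo_card_fiber_le (card_filter_fiber_ne_one_le hcard hσ)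
  have hgF : ∀ y ∈ G, deg (σ y) ≠ 1 → g y ∈ F ∧ deg (g y) = 0 := fun y hy hy₁ =>
    mem_filter.1 (hg (mem_filter.2 ⟨hy, hy₁⟩))
  refine ⟨fun y => if deg (σ y) = 1 then σ y else g y, fun y hy => ?_, fun y hy z hz hzy => ?_,
    fun f => ?_⟩
  · dsimp only
    split_ifs with hy₁
    exacts [hσ hy, (hgF y hy hy₁).1]
  · dsimp only at hzy
    split_ifs at hzy with hy₁
    · exact card_le_one.1 hy₁.le z (mem_filter.2 ⟨hz, hzy⟩) y (mem_filter.2 ⟨hy, rfl⟩)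
    · exact absurd (card_eq_zero.1 (hgF y hy hy₁).2) (ne_empty_of_mem (mem_filter.2 ⟨hz, hzy⟩))
  · by_cases hf : deg f = 1
    · refine (card_le_card fun y hy => ?_).trans (hf.le.trans one_le_two)
      obtain ⟨hy, hyf⟩ := mem_filter.1 hy
      dsimp only at hyf
      split_ifs at hyf with hy₁
      · exact mem_filter.2 ⟨hy, hyf⟩
      · exact absurd (hyf ▸ (hgF y hy hy₁).2) (by omega)
    · refine (card_le_card fun y hy => ?_).trans (hg₂ f)
      obtain ⟨hy, hyf⟩ := mem_filter.1 hy
      dsimp only at hyf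
      split_ifs at hyf with hy₁
      · exact absurd (hyf ▸ hy₁) hf
      · exact mem_filter.2 ⟨mem_filter.2 ⟨hy, hy₁⟩, hyf⟩

end Pairing

section Facility

variable {V : Type*} [MetricSpace V]

noncomputable def nearest (j : V) (F : Finset V) (hF : F.Nonempty) : V :=
  (F.exists_mem_eq_inf' hF (dist j ·)).choose

lemma nearest_mem (j : V) {F : Finset V} (hF : F.Nonempty) : nearest j F hF ∈ F :=
  (F.exists_mem_eq_inf' hF (dist j ·)).choose_spec.1

lemma dist_nearest (j : V) {F : Finset V} (hF : F.Nonempty) :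
    dist j (nearest j F hF) = distSet j F hF :=
  (F.exists_mem_eq_inf' hF (dist j ·)).choose_spec.2.symm

lemma distSet_le_dist (j : V) {F : Finset V} (hF : F.Nonempty) {f : V} (hf : f ∈ F) :
    distSet j F hF ≤ dist j f :=
  inf'_le _ hf

lemma distSet_nonneg (j : V) {F : Finset V} (hF : F.Nonempty) : 0 ≤ distSet j F hF :=
  le_inf' hF _ fun _ _ => dist_nonneg

lemma dist_nearest_nearest_le (j : V) {F G : Finset V} (hF : F.Nonempty) (hG : G.Nonempty) :
    dist j (nearest (nearest j G hG) F hF) ≤ 2 * distSet j G hG + distSet j F hF := by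
  set y := nearest j G hG
  calc dist j (nearest y F hF) ≤ dist j y + distSet y F hF :=
        dist_nearest y hF ▸ dist_triangle _ _ _
    _ ≤ dist j y + dist y (nearest j F hF) := by
        gcongr; exact distSet_le_dist y hF (nearest_mem j hF)
    _ ≤ dist j y + (dist y j + dist j (nearest j F hF)) := by gcongr; exact dist_triangle _ _ _
    _ = 2 * distSet j G hG + distSet j F hF := by
        rw [dist_comm y j, dist_nearest, dist_nearest]; ring

/-- Once `f` is swapped out for `y`, a client of `y` is served by `y`, and any other client of `f`
by the `F`-facility nearest to its nearest `G`-facility, which `hcapt` keeps in the new set. -/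
lemma distSet_swap_rpow_le [DecidableEq V] {p : ℝ} (hp : 0 ≤ p) {F G : Finset V}
    (hF : F.Nonempty) (hG : G.Nonempty) {y f : V} (hcapt : ∀ z ∈ G, nearest z F hF = f → z = y)
    (j : V) :
    distSet j (insert y (F.erase f)) (insert_nonempty _ _) ^ p ≤ distSet j F hF ^ p +
      ((if nearest j G hG = y then distSet j G hG ^ p - distSet j F hF ^ p else 0) +
        if nearest j F hF = f then
          (2 * distSet j G hG + distSet j F hF) ^ p - distSet j F hF ^ p else 0) := by
  set F' := insert y (F.erase f)
  have hF' : F'.Nonempty := insert_nonempty _ _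
  have hmem' : ∀ {x}, x ≠ f → x ∈ F → x ∈ F' := fun hx hxF =>
    mem_insert_of_mem (mem_erase.2 ⟨hx, hxF⟩)
  have hd := distSet_nonneg j hF
  have hd' := distSet_nonneg j hF'
  have hreroute : distSet j F hF ^ p ≤ (2 * distSet j G hG + distSet j F hF) ^ p :=
    Real.rpow_le_rpow hd (by linarith [distSet_nonneg j hG]) hp
  by_cases hjy : nearest j G hG = y
  · have : distSet j F' hF' ≤ distSet j G hG := by
      rw [← dist_nearest j hG, hjy]; exact distSet_le_dist j _ (mem_insert_self y _)
    have := Real.rpow_le_rpow hd' this hp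
    split_ifs <;> linarith
  by_cases hjf : nearest j F hF = f
  · have hmem : nearest (nearest j G hG) F hF ∈ F' :=
      hmem' (fun h => hjy (hcapt _ (nearest_mem j hG) h)) (nearest_mem _ hF)
    have := Real.rpow_le_rpow hd' ((distSet_le_dist j _ hmem).trans
      (dist_nearest_nearest_le j hF hG)) hp
    simp only [if_neg hjy, if_pos hjf]
    linarith
  · have := Real.rpow_le_rpow hd' ((distSet_le_dist j _ (hmem' hjf (nearest_mem j hF))).trans
      (dist_nearest j hF).le) hp
    simp only [if_neg hjy, if_neg hjf]
    linarith

variable [Fintype V]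

lemma sum_distSet_rpow_nonneg (p : ℝ) {F : Finset V} (hF : F.Nonempty) :
    0 ≤ ∑ j, distSet j F hF ^ p :=
  sum_nonneg fun j _ => Real.rpow_nonneg (distSet_nonneg j hF) p

lemma phiP_nonneg (p : ℝ) {F : Finset V} (hF : F.Nonempty) : 0 ≤ phiP p F hF :=
  Real.rpow_nonneg (sum_distSet_rpow_nonneg p hF) _

lemma phiP_rpow {p : ℝ} (hp : p ≠ 0) {F : Finset V} (hF : F.Nonempty) :
    phiP p F hF ^ p = ∑ j, distSet j F hF ^ p := by
  rw [phiP, one_div, Real.rpow_inv_rpow (sum_distSet_rpow_nonneg p hF) hp]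

lemma sum_distSet_rpow_le_of_phiP_le {p : ℝ} (hp : 0 < p) {F G : Finset V}
    {hF : F.Nonempty} {hG : G.Nonempty} (h : phiP p F hF ≤ phiP p G hG) :
    ∑ j, distSet j F hF ^ p ≤ ∑ j, distSet j G hG ^ p :=
  (Real.rpow_le_rpow_iff (sum_distSet_rpow_nonneg p hF) (sum_distSet_rpow_nonneg p hG)
    (one_div_pos.2 hp)).1 h

lemma sum_two_mul_add_rpow_le {p : ℝ} (hp : 1 ≤ p) {F G : Finset V} (hF : F.Nonempty)
    (hG : G.Nonempty) :
    ∑ j, (2 * distSet j G hG + distSet j F hF) ^ p ≤ (2 * phiP p G hG + phiP p F hF) ^ p := by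
  have hG₀ : ∀ j ∈ univ, 0 ≤ distSet j G hG := fun j _ => distSet_nonneg j hG
  have hF₀ : ∀ j ∈ univ, 0 ≤ distSet j F hF := fun j _ => distSet_nonneg j hF
  have h₁ := Real.Lp_add_le_of_nonneg univ hp hG₀ hG₀
  have h₂ :=
    Real.Lp_add_le_of_nonneg univ hp (fun j hj => add_nonneg (hG₀ j hj) (hG₀ j hj)) hF₀
  rw [← Real.rpow_inv_le_iff_of_pos (sum_nonneg fun j _ => Real.rpow_nonneg (by
    linarith [hG₀ j (mem_univ j), hF₀ j (mem_univ j)]) p)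
    (by linarith [phiP_nonneg p hG, phiP_nonneg p hF]) (by linarith)]
  simp only [phiP, one_div, two_mul] at h₁ h₂ ⊢
  linarith

theorem three_mul_sum_rpow_le_of_swap_optimal [DecidableEq V] {p : ℝ} (hp : 0 ≤ p)
    {F G : Finset V} (hF : F.Nonempty) (hG : G.Nonempty) (hcard : #G ≤ #F)
    (hopt : ∀ r ∈ F, ∀ f' : V, ∑ j, distSet j F hF ^ p ≤
      ∑ j, distSet j (insert f' (F.erase r)) (insert_nonempty _ _) ^ p) :
    3 * ∑ j, distSet j F hF ^ p ≤
      ∑ j, distSet j G hG ^ p + 2 * ∑ j, (2 * distSet j G hG + distSet j F hF) ^ p := by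
  obtain ⟨r, hrF, hcapt, hfib⟩ :=
    exists_swap_pairing hcard (σ := (nearest · F hF)) fun y _ => nearest_mem y hF
  set a : V → ℝ := fun j => distSet j G hG ^ p - distSet j F hF ^ p
  set b : V → ℝ := fun j => (2 * distSet j G hG + distSet j F hF) ^ p - distSet j F hF ^ p
  have hswap : ∀ y ∈ G, 0 ≤ ∑ j, ((if nearest j G hG = y then a j else 0) +
      if nearest j F hF = r y then b j else 0) := by
    intro y hy
    have := (hopt (r y) (hrF hy) y).trans
      (sum_le_sum fun j _ => distSet_swap_rpow_le hp hF hG (hcapt y hy) j)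
    rw [sum_add_distrib] at this
    linarith
  have hcharge : ∀ j, ∑ y ∈ G, ((if nearest j G hG = y then a j else 0) +
      if nearest j F hF = r y then b j else 0) ≤ a j + 2 * b j := by
    intro j
    have hb : 0 ≤ b j := sub_nonneg.2 (Real.rpow_le_rpow (distSet_nonneg j hF)
      (by linarith [distSet_nonneg j hG]) hp)
    rw [sum_add_distrib, sum_ite_eq, if_pos (nearest_mem j hG), ← sum_filter, sum_const,
      nsmul_eq_mul]
    gcongr
    simp_rw [eq_comm (a := nearest j F hF)]
    exact_mod_cast hfib _
  have := (sum_nonneg hswap).trans (sum_comm.trans_le (sum_le_sum fun j _ => hcharge j))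
  simp only [a, b, sum_add_distrib, sum_sub_distrib, ← mul_sum] at this
  linarith

end Facility

/-- At a single-swap local optimum for the ℓ_p objective,
`Φ_p(F) ≤ 5p·Φ_p(F*)`; moreover, for `p = 2`, `Φ_2(F) ≤ 9·Φ_2(F*)`. -/
theorem lp_single_swap_local_opt {V : Type*} [MetricSpace V] [Fintype V] [DecidableEq V]
    (p : ℝ) (hp : 1 ≤ p) (k : ℕ)
    (F Fstar : Finset V) (hF : F.Nonempty) (hFstar : Fstar.Nonempty)
    (hcardF : F.card = k) (hcardFstar : Fstar.card = k)
    (hlocal : ∀ r ∈ F, ∀ f' : V,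
      phiP p (insert f' (F.erase r)) (insert_nonempty _ _) ≥ phiP p F hF) :
    phiP p F hF ≤ 5 * p * phiP p Fstar hFstar ∧
      (p = 2 → phiP p F hF ≤ 9 * phiP p Fstar hFstar) := by
  have hp₀ : 0 < p := by linarith
  have hsum := three_mul_sum_rpow_le_of_swap_optimal hp₀.le hF hFstar (by omega)
    fun r hr f' => sum_distSet_rpow_le_of_phiP_le hp₀ (hlocal r hr f')
  have hkey : 3 * phiP p F hF ^ p ≤
      phiP p Fstar hFstar ^ p + 2 * (2 * phiP p Fstar hFstar + phiP p F hF) ^ p := by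
    rw [phiP_rpow hp₀.ne', phiP_rpow hp₀.ne']
    linarith [sum_two_mul_add_rpow_le hp hF hFstar]
  refine ⟨le_five_mul_of_three_rpow_le hp (phiP_nonneg p hFstar) (phiP_nonneg p hF) hkey, ?_⟩
  rintro rfl
  simp only [Real.rpow_two] at hkey
  exact le_nine_mul_of_three_sq_le (phiP_nonneg 2 hFstar) hkey
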